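/- Let n ≥ 2, let λ₁,…,λₙ > 0 be real and μ₁, μ₂ > 0, and let K^{(λ,μ)} : D^n × D^n → M₃(ℂ) be the Type I kernel K^{(λ,μ)}(z,w) = D(z,w)·A(z,w)·D(z,w)·∏_{j=1}^n (1 − z_j w̄_j)^{−λ_j − 2δ_{1j} − 2δ_{2j}}, where D(z,w) = diag((1−z₁w̄₁)(1−z₂w̄₂), 1−z₂w̄₂, 1−z₁w̄₁) and A(z,w) has rows (1, z₁, z₂), (w̄₁, 1/λ₁ + μ₁² + z₁w̄₁, w̄₁z₂), (w̄₂, z₁w̄₂, 1/λ₂ + μ₂² + z₂w̄₂). Let Δ := diag(1, (1/λ₁ + μ₁²)^{1/2}, (1/λ₂ + μ₂²)^{1/2}), and set K₀(z,w) := Δ⁻¹ K^{(λ,μ)}(z,w) Δ⁻¹. Then for all z, w ∈ D^n the matrices K₀(z,0) and K₀(0,w) are invertible; and if A ∈ M₃(ℂ) satisfies A* = A, A² = A, and A commutes with K₀(z,0)⁻¹ K₀(z,w) K₀(0,w)⁻¹ for all z, w ∈ D^n, then A = 0 or A = I₃. -/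

import Mathlib

open Matrix

/-- The diagonal factor `D(z,w)` of the Type I kernel. -/
noncomputable def typeID {m : ℕ} (z w : Fin (m + 2) → ℂ) : Matrix (Fin 3) (Fin 3) ℂ :=
  Matrix.diagonal
    ![(1 - z 0 * star (w 0)) * (1 - z 1 * star (w 1)),
      1 - z 1 * star (w 1),
      1 - z 0 * star (w 0)]

/-- The middle factor `A(z,w)` of the Type I kernel. -/
noncomputable def typeIA {m : ℕ} (lam : Fin (m + 2) → ℝ) (μ₁ μ₂ : ℝ)
    (z w : Fin (m + 2) → ℂ) : Matrix (Fin 3) (Fin 3) ℂ :=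
  !![1, z 0, z 1;
     star (w 0), 1 / (lam 0 : ℂ) + (μ₁ : ℂ) ^ 2 + z 0 * star (w 0), star (w 0) * z 1;
     star (w 1), z 0 * star (w 1), 1 / (lam 1 : ℂ) + (μ₂ : ℂ) ^ 2 + z 1 * star (w 1)]

/-- The Type I kernel `K^{(λ,μ)}(z,w)` on the polydisc `𝔻^{m+2}`. -/
noncomputable def typeIKernel {m : ℕ} (lam : Fin (m + 2) → ℝ) (μ₁ μ₂ : ℝ)
    (z w : Fin (m + 2) → ℂ) : Matrix (Fin 3) (Fin 3) ℂ :=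
  (∏ j, (1 - z j * star (w j)) ^
      (-(lam j : ℂ) - (if j = 0 then 2 else 0) - (if j = 1 then 2 else 0))) •
    (typeID z w * typeIA lam μ₁ μ₂ z w * typeID z w)

/-- The normalizing diagonal matrix `Δ = diag(1, √(1/λ₁+μ₁²), √(1/λ₂+μ₂²))`. -/
noncomputable def typeIDelta {m : ℕ} (lam : Fin (m + 2) → ℝ) (μ₁ μ₂ : ℝ) :
    Matrix (Fin 3) (Fin 3) ℂ :=
  Matrix.diagonal
    ![1, (Real.sqrt (1 / lam 0 + μ₁ ^ 2) : ℂ), (Real.sqrt (1 / lam 1 + μ₂ ^ 2) : ℂ)]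

/-- The normalized Type I kernel `K₀ = Δ⁻¹ K^{(λ,μ)} Δ⁻¹`. -/
noncomputable def typeIK₀ {m : ℕ} (lam : Fin (m + 2) → ℝ) (μ₁ μ₂ : ℝ)
    (z w : Fin (m + 2) → ℂ) : Matrix (Fin 3) (Fin 3) ℂ :=
  (typeIDelta lam μ₁ μ₂)⁻¹ * typeIKernel lam μ₁ μ₂ z w * (typeIDelta lam μ₁ μ₂)⁻¹

/-!
Normalised by `Δ`, the middle factor splits as `Δ⁻¹ A(z,w) Δ⁻¹ = U(w)ᴴ U(z)` with
`U(z)` unipotent upper triangular (`typeIFactor`), so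
`K₀(z,w) = c(z,w) • D(z,w) U(w)ᴴ U(z) D(z,w)` for a scalar `c(z,w) ≠ 0`. In particular
`K₀(z,0) = U(z)` and `K₀(0,w) = U(w)ᴴ` are invertible. When `z` and `w` have disjoint supports,
`c = 1` and `D = 1`, so the normalized kernel is the group commutator `U(z)⁻¹ U(w)ᴴ U(z) U(w)ᴴ⁻¹`;
for `z = e₀/2, w = e₁/2` and vice versa it is `1 + g E₂₁`, resp. `1 + g E₁₂` with `g ≠ 0`, and
commuting with both forces `A = diag(a, b, b)`. At `z = w = e₀/2` the normalized kernel has a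
nonzero `(0,1)` entry, which forces `a = b`; an idempotent scalar matrix is `0` or `1`.
-/

namespace Matrix

section Unipotent

variable {R : Type*} [CommRing R]

def upperUnipotent (a b : R) : Matrix (Fin 3) (Fin 3) R := !![1, a, b; 0, 1, 0; 0, 0, 1]

@[simp]
lemma upperUnipotent_zero : upperUnipotent (0 : R) 0 = 1 := by
  rw [upperUnipotent, one_fin_three]

lemma conjTranspose_upperUnipotent [StarRing R] (a b : R) :
    (upperUnipotent a b)ᴴ = !![1, 0, 0; star a, 1, 0; star b, 0, 1] := by
  ext i j; fin_cases i <;> fin_cases j <;> simp [upperUnipotent]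

lemma upperUnipotent_mul_neg (a b : R) : upperUnipotent a b * upperUnipotent (-a) (-b) = 1 := by
  simp only [upperUnipotent, mul_fin_three, one_fin_three]
  ext i j; fin_cases i <;> fin_cases j <;> simp

lemma inv_upperUnipotent (a b : R) : (upperUnipotent a b)⁻¹ = upperUnipotent (-a) (-b) :=
  inv_eq_right_inv (upperUnipotent_mul_neg a b)

lemma isUnit_upperUnipotent (a b : R) : IsUnit (upperUnipotent a b) :=
  (isUnit_iff_isUnit_det _).mpr (isUnit_det_of_right_inverse (upperUnipotent_mul_neg a b))

lemma commutator_upperUnipotent_left [StarRing R] (a b : R) :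
    (upperUnipotent a 0)⁻¹ * (upperUnipotent 0 b)ᴴ * upperUnipotent a 0 *
        ((upperUnipotent 0 b)ᴴ)⁻¹ = 1 + single 2 1 (star b * a) := by
  rw [← conjTranspose_nonsing_inv, inv_upperUnipotent, inv_upperUnipotent,
    conjTranspose_upperUnipotent, conjTranspose_upperUnipotent]
  simp only [upperUnipotent, mul_fin_three, one_fin_three]
  ext i j; fin_cases i <;> fin_cases j <;> simp

lemma commutator_upperUnipotent_right [StarRing R] (a b : R) :
    (upperUnipotent 0 b)⁻¹ * (upperUnipotent a 0)ᴴ * upperUnipotent 0 b *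
        ((upperUnipotent a 0)ᴴ)⁻¹ = 1 + single 1 2 (star a * b) := by
  rw [← conjTranspose_nonsing_inv, inv_upperUnipotent, inv_upperUnipotent,
    conjTranspose_upperUnipotent, conjTranspose_upperUnipotent]
  simp only [upperUnipotent, mul_fin_three, one_fin_three]
  ext i j; fin_cases i <;> fin_cases j <;> simp

lemma conj_upperUnipotent_apply_zero_one [StarRing R] (a b p : R) :
    ((upperUnipotent a 0)⁻¹ * (diagonal ![1 - p, 1, 1 - p] * (upperUnipotent b 0)ᴴ *
        upperUnipotent a 0 * diagonal ![1 - p, 1, 1 - p]) * ((upperUnipotent b 0)ᴴ)⁻¹) 0 1 =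
      -(a * (p + a * star b)) := by
  rw [← conjTranspose_nonsing_inv, inv_upperUnipotent, inv_upperUnipotent,
    conjTranspose_upperUnipotent, conjTranspose_upperUnipotent]
  simp only [upperUnipotent, diagonal_vec3, mul_fin_three]
  simp
  ring

end Unipotent

variable {K : Type*} [Field K]

lemma commute_single_of_commute_one_add_single {n : Type*} [Fintype n] [DecidableEq n]
    {A : Matrix n n K} {i j : n} {c : K} (hc : c ≠ 0) (hA : Commute A (1 + single i j c)) :
    Commute (single i j 1) A := by
  have hA' : Commute A (c • single i j 1) := by
    simpa [smul_single] using hA.sub_right (Commute.one_right A)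
  exact ((Commute.smul_right_iff₀ hc).mp hA').symm

lemma eq_smul_one_of_commute {A M : Matrix (Fin 3) (Fin 3) K}
    (h₁₂ : Commute (single 1 2 1) A) (h₂₁ : Commute (single 2 1 1) A) (hM : Commute A M)
    (hM₀₁ : M 0 1 ≠ 0) : A = A 0 0 • 1 := by
  have hA₂₂ := diag_eq_of_commute_single h₂₁
  have hA₀₁ : A 0 1 = 0 := col_eq_zero_of_commute_single h₁₂ (by decide)
  have hA₀₂ : A 0 2 = 0 := col_eq_zero_of_commute_single h₂₁ (by decide)
  have hA₁₀ : A 1 0 = 0 := row_eq_zero_of_commute_single h₂₁ (by decide)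
  have hA₁₂ : A 1 2 = 0 := row_eq_zero_of_commute_single h₂₁ (by decide)
  have hA₂₀ : A 2 0 = 0 := row_eq_zero_of_commute_single h₁₂ (by decide)
  have hA₂₁ : A 2 1 = 0 := row_eq_zero_of_commute_single h₁₂ (by decide)
  have hA₁₁ : A 0 0 = A 1 1 := by
    have := congr_fun₂ hM.eq 0 1
    simp only [mul_apply, Fin.sum_univ_three, hA₀₁, hA₀₂, hA₂₁] at this
    exact mul_right_cancel₀ hM₀₁ (by linear_combination this)
  ext i j; fin_cases i <;> fin_cases j <;> simp [*]

end Matrix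

lemma Complex.ofReal_sqrt_ne_zero {x : ℝ} (hx : 0 < x) : ((√x : ℝ) : ℂ) ≠ 0 := by
  exact_mod_cast (Real.sqrt_pos.mpr hx).ne'

lemma Complex.ofReal_sqrt_sq {x : ℝ} (hx : 0 ≤ x) : ((√x : ℝ) : ℂ) ^ 2 = x := by
  exact_mod_cast Real.sq_sqrt hx

lemma Pi.norm_single_apply_lt_one {ι : Type*} [DecidableEq ι] {t : ℂ} (ht : ‖t‖ < 1)
    (j i : ι) : ‖(Pi.single j t : ι → ℂ) i‖ < 1 := by
  rcases eq_or_ne i j with rfl | hij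
  · simpa using ht
  · simp [hij]

lemma Pi.single_mul_star_single_of_ne {ι : Type*} [DecidableEq ι] {i j : ι} (hij : i ≠ j)
    (s t : ℂ) (k : ι) : (Pi.single i s : ι → ℂ) k * star ((Pi.single j t : ι → ℂ) k) = 0 := by
  rcases eq_or_ne k i with rfl | hk
  · simp [hij]
  · simp [hk]

section TypeIKernel

variable {m : ℕ} (lam : Fin (m + 2) → ℝ) (μ₁ μ₂ : ℝ)

noncomputable def typeIScalar (z w : Fin (m + 2) → ℂ) : ℂ :=
  ∏ j, (1 - z j * star (w j)) ^
    (-(lam j : ℂ) - (if j = 0 then 2 else 0) - (if j = 1 then 2 else 0))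

noncomputable def typeIFactor (z : Fin (m + 2) → ℂ) : Matrix (Fin 3) (Fin 3) ℂ :=
  upperUnipotent (z 0 / typeIDelta lam μ₁ μ₂ 1 1) (z 1 / typeIDelta lam μ₁ μ₂ 2 2)

noncomputable def typeINormalizedKernel (z w : Fin (m + 2) → ℂ) : Matrix (Fin 3) (Fin 3) ℂ :=
  (typeIK₀ lam μ₁ μ₂ z 0)⁻¹ * typeIK₀ lam μ₁ μ₂ z w * (typeIK₀ lam μ₁ μ₂ 0 w)⁻¹

lemma typeIKernel_eq_smul (z w : Fin (m + 2) → ℂ) :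
    typeIKernel lam μ₁ μ₂ z w =
      typeIScalar lam z w • (typeID z w * typeIA lam μ₁ μ₂ z w * typeID z w) :=
  rfl

lemma typeIScalar_ne_zero {z w : Fin (m + 2) → ℂ} (h : ∀ j, z j * star (w j) ≠ 1) :
    typeIScalar lam z w ≠ 0 :=
  Finset.prod_ne_zero_iff.mpr fun j _ =>
    Complex.cpow_ne_zero_iff.mpr (Or.inl (sub_ne_zero.mpr (h j).symm))

lemma typeIScalar_eq_one {z w : Fin (m + 2) → ℂ} (h : ∀ j, z j * star (w j) = 0) :
    typeIScalar lam z w = 1 := by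
  simp only [typeIScalar, h, sub_zero, Complex.one_cpow, Finset.prod_const_one]

lemma typeID_eq_one {z w : Fin (m + 2) → ℂ} (h : ∀ j, z j * star (w j) = 0) :
    typeID z w = 1 := by
  simp only [typeID, h, sub_zero, mul_one, diagonal_vec3, one_fin_three]

variable {lam μ₁ μ₂}

lemma typeIDelta_one_one_ne_zero (h₁ : 0 < 1 / lam 0 + μ₁ ^ 2) :
    typeIDelta lam μ₁ μ₂ 1 1 ≠ 0 := by
  rw [typeIDelta, diagonal_apply_eq]
  exact Complex.ofReal_sqrt_ne_zero h₁

lemma typeIDelta_two_two_ne_zero (h₂ : 0 < 1 / lam 1 + μ₂ ^ 2) :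
    typeIDelta lam μ₁ μ₂ 2 2 ≠ 0 := by
  rw [typeIDelta, diagonal_apply_eq]
  exact Complex.ofReal_sqrt_ne_zero h₂

lemma isUnit_det_typeIDelta (h₁ : 0 < 1 / lam 0 + μ₁ ^ 2) (h₂ : 0 < 1 / lam 1 + μ₂ ^ 2) :
    IsUnit (typeIDelta lam μ₁ μ₂).det := by
  rw [isUnit_iff_ne_zero, typeIDelta, det_diagonal, Fin.prod_univ_three]
  exact mul_ne_zero (mul_ne_zero one_ne_zero (Complex.ofReal_sqrt_ne_zero h₁))
    (Complex.ofReal_sqrt_ne_zero h₂)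

lemma typeIA_eq (h₁ : 0 < 1 / lam 0 + μ₁ ^ 2) (h₂ : 0 < 1 / lam 1 + μ₂ ^ 2)
    (z w : Fin (m + 2) → ℂ) :
    typeIA lam μ₁ μ₂ z w = typeIDelta lam μ₁ μ₂ * (typeIFactor lam μ₁ μ₂ w)ᴴ *
      typeIFactor lam μ₁ μ₂ z * typeIDelta lam μ₁ μ₂ := by
  have hs₁ := Complex.ofReal_sqrt_ne_zero h₁
  have hs₂ := Complex.ofReal_sqrt_ne_zero h₂
  have e₁ := Complex.ofReal_sqrt_sq h₁.le
  have e₂ := Complex.ofReal_sqrt_sq h₂.le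
  push_cast at e₁ e₂
  rw [typeIFactor, typeIFactor, conjTranspose_upperUnipotent]
  simp only [typeIA, upperUnipotent, typeIDelta, diagonal_vec3, mul_fin_three]
  ext i j; fin_cases i <;> fin_cases j <;> simp <;> field_simp <;> simp only [e₁, e₂] <;> ring

lemma typeIK₀_eq (h₁ : 0 < 1 / lam 0 + μ₁ ^ 2) (h₂ : 0 < 1 / lam 1 + μ₂ ^ 2)
    (z w : Fin (m + 2) → ℂ) :
    typeIK₀ lam μ₁ μ₂ z w = typeIScalar lam z w • (typeID z w * (typeIFactor lam μ₁ μ₂ w)ᴴ *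
      typeIFactor lam μ₁ μ₂ z * typeID z w) := by
  set Δ := typeIDelta lam μ₁ μ₂
  set D := typeID z w
  have hΔ := isUnit_det_typeIDelta h₁ h₂
  have hDΔ : D * Δ = Δ * D := (commute_diagonal _ _).eq
  have hleft : Δ⁻¹ * D * Δ = D := by
    rw [mul_assoc, hDΔ, ← mul_assoc, nonsing_inv_mul _ hΔ, one_mul]
  have hright : Δ * D * Δ⁻¹ = D := by
    rw [← hDΔ, mul_assoc, mul_nonsing_inv _ hΔ, mul_one]
  rw [typeIK₀, typeIKernel_eq_smul, typeIA_eq h₁ h₂, Matrix.mul_smul, Matrix.smul_mul]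
  congr 1
  calc Δ⁻¹ * (D * (Δ * (typeIFactor lam μ₁ μ₂ w)ᴴ * typeIFactor lam μ₁ μ₂ z * Δ) * D) * Δ⁻¹
      = (Δ⁻¹ * D * Δ) * ((typeIFactor lam μ₁ μ₂ w)ᴴ * typeIFactor lam μ₁ μ₂ z) *
          (Δ * D * Δ⁻¹) := by simp only [Matrix.mul_assoc]
    _ = _ := by rw [hleft, hright]; simp only [Matrix.mul_assoc]

lemma typeIK₀_of_orthogonal (h₁ : 0 < 1 / lam 0 + μ₁ ^ 2) (h₂ : 0 < 1 / lam 1 + μ₂ ^ 2)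
    {z w : Fin (m + 2) → ℂ} (h : ∀ j, z j * star (w j) = 0) :
    typeIK₀ lam μ₁ μ₂ z w = (typeIFactor lam μ₁ μ₂ w)ᴴ * typeIFactor lam μ₁ μ₂ z := by
  rw [typeIK₀_eq h₁ h₂, typeIScalar_eq_one lam h, typeID_eq_one h, one_smul, one_mul,
    mul_one]

lemma typeIK₀_zero_right (h₁ : 0 < 1 / lam 0 + μ₁ ^ 2) (h₂ : 0 < 1 / lam 1 + μ₂ ^ 2)
    (z : Fin (m + 2) → ℂ) : typeIK₀ lam μ₁ μ₂ z 0 = typeIFactor lam μ₁ μ₂ z := by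
  rw [typeIK₀_of_orthogonal h₁ h₂ (by simp)]
  simp [typeIFactor]

lemma typeIK₀_zero_left (h₁ : 0 < 1 / lam 0 + μ₁ ^ 2) (h₂ : 0 < 1 / lam 1 + μ₂ ^ 2)
    (w : Fin (m + 2) → ℂ) : typeIK₀ lam μ₁ μ₂ 0 w = (typeIFactor lam μ₁ μ₂ w)ᴴ := by
  rw [typeIK₀_of_orthogonal h₁ h₂ (by simp)]
  simp [typeIFactor]

lemma typeIFactor_single_zero (t : ℂ) :
    typeIFactor lam μ₁ μ₂ (Pi.single 0 t) = upperUnipotent (t / typeIDelta lam μ₁ μ₂ 1 1) 0 := by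
  simp [typeIFactor]

lemma typeIFactor_single_one (t : ℂ) :
    typeIFactor lam μ₁ μ₂ (Pi.single 1 t) = upperUnipotent 0 (t / typeIDelta lam μ₁ μ₂ 2 2) := by
  simp [typeIFactor]

lemma commute_single_two_one_of_commute_typeINormalizedKernel
    (h₁ : 0 < 1 / lam 0 + μ₁ ^ 2) (h₂ : 0 < 1 / lam 1 + μ₂ ^ 2) {t : ℂ} (ht : t ≠ 0)
    {A : Matrix (Fin 3) (Fin 3) ℂ}
    (hA : Commute A (typeINormalizedKernel lam μ₁ μ₂ (Pi.single 0 t) (Pi.single 1 t))) :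
    Commute (single 2 1 1) A := by
  rw [typeINormalizedKernel, typeIK₀_zero_right h₁ h₂, typeIK₀_zero_left h₁ h₂,
    typeIK₀_of_orthogonal h₁ h₂ (Pi.single_mul_star_single_of_ne zero_ne_one t t), ← mul_assoc,
    typeIFactor_single_zero, typeIFactor_single_one, commutator_upperUnipotent_left] at hA
  refine commute_single_of_commute_one_add_single ?_ hA
  simp [ht, typeIDelta_one_one_ne_zero h₁, typeIDelta_two_two_ne_zero h₂]

lemma commute_single_one_two_of_commute_typeINormalizedKernel
    (h₁ : 0 < 1 / lam 0 + μ₁ ^ 2) (h₂ : 0 < 1 / lam 1 + μ₂ ^ 2) {t : ℂ} (ht : t ≠ 0)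
    {A : Matrix (Fin 3) (Fin 3) ℂ}
    (hA : Commute A (typeINormalizedKernel lam μ₁ μ₂ (Pi.single 1 t) (Pi.single 0 t))) :
    Commute (single 1 2 1) A := by
  rw [typeINormalizedKernel, typeIK₀_zero_right h₁ h₂, typeIK₀_zero_left h₁ h₂,
    typeIK₀_of_orthogonal h₁ h₂ (Pi.single_mul_star_single_of_ne one_ne_zero t t), ← mul_assoc,
    typeIFactor_single_zero, typeIFactor_single_one, commutator_upperUnipotent_right] at hA
  refine commute_single_of_commute_one_add_single ?_ hA
  simp [ht, typeIDelta_one_one_ne_zero h₁, typeIDelta_two_two_ne_zero h₂]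

lemma typeINormalizedKernel_single_zero_apply_zero_one_ne_zero
    (h₁ : 0 < 1 / lam 0 + μ₁ ^ 2) (h₂ : 0 < 1 / lam 1 + μ₂ ^ 2) {t : ℂ} (ht₀ : t ≠ 0)
    (ht : ‖t‖ < 1) :
    typeINormalizedKernel lam μ₁ μ₂ (Pi.single 0 t) (Pi.single 0 t) 0 1 ≠ 0 := by
  set a := t / typeIDelta lam μ₁ μ₂ 1 1
  have hD : typeID (Pi.single 0 t : Fin (m + 2) → ℂ) (Pi.single 0 t) =
      diagonal ![1 - t * star t, 1, 1 - t * star t] := by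
    simp [typeID]
  have hc : typeIScalar lam (Pi.single 0 t : Fin (m + 2) → ℂ) (Pi.single 0 t) ≠ 0 := by
    refine typeIScalar_ne_zero lam fun j => ?_
    rcases eq_or_ne j 0 with rfl | hj
    · rw [Pi.single_eq_same, Complex.star_def, Complex.mul_conj, Complex.normSq_eq_norm_sq]
      exact_mod_cast (pow_lt_one₀ (norm_nonneg t) ht two_ne_zero).ne
    · simp [hj]
  have ha : a ≠ 0 := div_ne_zero ht₀ (typeIDelta_one_one_ne_zero h₁)
  have hsum : t * star t + a * star a ≠ 0 := by
    simp only [Complex.star_def, Complex.mul_conj]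
    exact_mod_cast (add_pos_of_pos_of_nonneg (Complex.normSq_pos.mpr ht₀)
      (Complex.normSq_nonneg a)).ne'
  rw [typeINormalizedKernel, typeIK₀_zero_right h₁ h₂, typeIK₀_zero_left h₁ h₂,
    typeIK₀_eq h₁ h₂, typeIFactor_single_zero, hD, Matrix.mul_smul, Matrix.smul_mul,
    Matrix.smul_apply, conj_upperUnipotent_apply_zero_one, smul_eq_mul]
  exact mul_ne_zero hc (neg_ne_zero.mpr (mul_ne_zero ha hsum))

end TypeIKernel

theorem statement14_general {m : ℕ} (lam : Fin (m + 2) → ℝ) (hlam : ∀ j, 0 < lam j)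
    (μ₁ μ₂ : ℝ) :
    (∀ z : Fin (m + 2) → ℂ, (∀ i, ‖z i‖ < 1) →
      IsUnit (typeIK₀ lam μ₁ μ₂ z 0)) ∧
    (∀ w : Fin (m + 2) → ℂ, (∀ i, ‖w i‖ < 1) →
      IsUnit (typeIK₀ lam μ₁ μ₂ 0 w)) ∧
    (∀ A : Matrix (Fin 3) (Fin 3) ℂ, Aᴴ = A → A * A = A →
      (∀ z w : Fin (m + 2) → ℂ, (∀ i, ‖z i‖ < 1) →
        (∀ i, ‖w i‖ < 1) →
        A * ((typeIK₀ lam μ₁ μ₂ z 0)⁻¹ * typeIK₀ lam μ₁ μ₂ z w *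
              (typeIK₀ lam μ₁ μ₂ 0 w)⁻¹) =
          ((typeIK₀ lam μ₁ μ₂ z 0)⁻¹ * typeIK₀ lam μ₁ μ₂ z w *
              (typeIK₀ lam μ₁ μ₂ 0 w)⁻¹) * A) →
      A = 0 ∨ A = 1) := by
  have h₁ : 0 < 1 / lam 0 + μ₁ ^ 2 := by have := hlam 0; positivity
  have h₂ : 0 < 1 / lam 1 + μ₂ ^ 2 := by have := hlam 1; positivity
  refine ⟨fun z _ => ?_, fun w _ => ?_, fun A _ hA hcomm => ?_⟩
  · rw [typeIK₀_zero_right h₁ h₂]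
    exact isUnit_upperUnipotent _ _
  · rw [typeIK₀_zero_left h₁ h₂]
    exact (isUnit_upperUnipotent _ _).star
  have ht : ‖(2⁻¹ : ℂ)‖ < 1 := by norm_num
  have hcomm' (i j : Fin (m + 2)) :
      Commute A (typeINormalizedKernel lam μ₁ μ₂ (Pi.single i 2⁻¹) (Pi.single j 2⁻¹)) :=
    hcomm _ _ (Pi.norm_single_apply_lt_one ht i) (Pi.norm_single_apply_lt_one ht j)
  have hA_eq : A = A 0 0 • 1 :=
    eq_smul_one_of_commute
      (commute_single_one_two_of_commute_typeINormalizedKernel h₁ h₂ (by norm_num) (hcomm' 1 0))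
      (commute_single_two_one_of_commute_typeINormalizedKernel h₁ h₂ (by norm_num) (hcomm' 0 1))
      (hcomm' 0 0)
      (typeINormalizedKernel_single_zero_apply_zero_one_ne_zero h₁ h₂ (by norm_num) ht)
  have hidem : IsIdempotentElem (A 0 0) := by
    have := congr_fun₂ hA 0 0
    rw [hA_eq] at this
    simpa [IsIdempotentElem] using this
  rcases IsIdempotentElem.iff_eq_zero_or_one.mp hidem with h | h
  · left; rw [hA_eq, h, zero_smul]
  · right; rw [hA_eq, h, one_smul]

/-- The matrices `K₀(z,0)`, `K₀(0,w)` are invertible on the polydisc, and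
the only self-adjoint idempotents commuting with the normalized kernel
`K₀(z,0)⁻¹ K₀(z,w) K₀(0,w)⁻¹` for all `z, w` in the polydisc are `0` and `I₃`. -/
theorem statement14 {m : ℕ} (lam : Fin (m + 2) → ℝ) (hlam : ∀ j, 0 < lam j)
    (μ₁ μ₂ : ℝ) (hμ₁ : 0 < μ₁) (hμ₂ : 0 < μ₂) :
    (∀ z : Fin (m + 2) → ℂ, (∀ i, ‖z i‖ < 1) →
      IsUnit (typeIK₀ lam μ₁ μ₂ z 0)) ∧
    (∀ w : Fin (m + 2) → ℂ, (∀ i, ‖w i‖ < 1) →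
      IsUnit (typeIK₀ lam μ₁ μ₂ 0 w)) ∧
    (∀ A : Matrix (Fin 3) (Fin 3) ℂ, Aᴴ = A → A * A = A →
      (∀ z w : Fin (m + 2) → ℂ, (∀ i, ‖z i‖ < 1) →
        (∀ i, ‖w i‖ < 1) →
        A * ((typeIK₀ lam μ₁ μ₂ z 0)⁻¹ * typeIK₀ lam μ₁ μ₂ z w *
              (typeIK₀ lam μ₁ μ₂ 0 w)⁻¹) =
          ((typeIK₀ lam μ₁ μ₂ z 0)⁻¹ * typeIK₀ lam μ₁ μ₂ z w *
              (typeIK₀ lam μ₁ μ₂ 0 w)⁻¹) * A) →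
      A = 0 ∨ A = 1) :=
  statement14_general lam hlam μ₁ μ₂
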